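/- arXiv:2111.08505 — 3 statements merged into one kernel-verified Lean document; each statement's English description precedes it below -/
import Mathlib

section
/- For all integers N ≥ 1 and n ≥ 1 and every real t with 0 ≤ t ≤ 1/N, one has 2^{−2N} Σ_{ω, ω' ∈ {−1,1}^N} ( 1 + t Σ_{k=1}^N ω_k ω'_k )^n ≤ ( cosh(n t) )^N. -/
/-- For all integers `N ≥ 1`, `n ≥ 1` and every real `t` with `0 ≤ t ≤ 1/N`,
`2^{−2N} Σ_{ω, ω' ∈ {−1,1}^N} (1 + t Σ_{k=1}^N ω_k ω'_k)^n ≤ (cosh(n t))^N`.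
Sign vectors are encoded as maps `Fin N → Bool`, with `true ↦ 1` and `false ↦ -1`. -/
theorem stmt5 (N n : ℕ) (hN : 1 ≤ N) (hn : 1 ≤ n) (t : ℝ)
    (ht0 : 0 ≤ t) (ht : t ≤ 1 / N) :
    ((2 : ℝ) ^ (2 * N))⁻¹ *
      ∑ ω : Fin N → Bool, ∑ ω' : Fin N → Bool,
        (1 + t * ∑ k : Fin N,
            (if ω k then (1 : ℝ) else -1) * (if ω' k then (1 : ℝ) else -1)) ^ n
      ≤ Real.cosh (n * t) ^ N := by
  set e : Bool → ℝ := fun b => if b then 1 else -1 with he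
  have habs : ∀ b, |e b| = 1 := by intro b; cases b <;> simp [he]
  have htN : t * N ≤ 1 := by
    rw [div_eq_mul_inv] at ht
    calc t * N ≤ (1 * (N:ℝ)⁻¹) * N := by
          apply mul_le_mul_of_nonneg_right ht (Nat.cast_nonneg N)
      _ ≤ 1 := by
          rw [one_mul, inv_mul_cancel₀]
          positivity
  -- bound each term by product of exponentials
  have key : ∀ ω ω' : Fin N → Bool,
      (1 + t * ∑ k : Fin N, e (ω k) * e (ω' k)) ^ n
        ≤ ∏ k : Fin N, Real.exp (n * t * (e (ω k) * e (ω' k))) := by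
    intro ω ω'
    have hSbound : |∑ k : Fin N, e (ω k) * e (ω' k)| ≤ N := by
      calc |∑ k : Fin N, e (ω k) * e (ω' k)| ≤ ∑ k : Fin N, |e (ω k) * e (ω' k)| :=
            Finset.abs_sum_le_sum_abs _ _
        _ = N := by simp [abs_mul, habs]
    have h1 : 0 ≤ 1 + t * ∑ k : Fin N, e (ω k) * e (ω' k) := by
      have : t * ∑ k : Fin N, e (ω k) * e (ω' k) ≥ -(t * N) := by
        have := (abs_le.mp hSbound).1
        nlinarith
      linarith
    have h2 : 1 + t * ∑ k : Fin N, e (ω k) * e (ω' k)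
        ≤ Real.exp (t * ∑ k : Fin N, e (ω k) * e (ω' k)) :=
      Real.add_one_le_exp _ |>.trans_eq' (by ring_nf)
    calc (1 + t * ∑ k : Fin N, e (ω k) * e (ω' k)) ^ n
        ≤ Real.exp (t * ∑ k : Fin N, e (ω k) * e (ω' k)) ^ n :=
          pow_le_pow_left₀ h1 h2 n
      _ = ∏ k : Fin N, Real.exp (n * t * (e (ω k) * e (ω' k))) := by
          rw [← Real.exp_nat_mul, Finset.mul_sum, ← Real.exp_sum, Finset.mul_sum]
          congr 1
          apply Finset.sum_congr rfl; intros; ring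
  have hsum : ∑ ω : Fin N → Bool, ∑ ω' : Fin N → Bool,
      (1 + t * ∑ k : Fin N, e (ω k) * e (ω' k)) ^ n
        ≤ (2:ℝ)^N * ((2:ℝ) * Real.cosh (n * t)) ^ N := by
    have step1 : ∀ ω : Fin N → Bool,
        ∑ ω' : Fin N → Bool, ∏ k : Fin N, Real.exp (n * t * (e (ω k) * e (ω' k)))
          = ((2:ℝ) * Real.cosh (n * t)) ^ N := by
      intro ω
      rw [← Fintype.prod_sum (fun k (b : Bool) => Real.exp (n * t * (e (ω k) * e b)))]
      have : ∀ k : Fin N, ∑ j : Bool, Real.exp (n * t * (e (ω k) * e j))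
          = 2 * Real.cosh (n * t) := by
        intro k
        rw [Fintype.sum_bool]
        cases hk : ω k <;> simp [he, Real.cosh_eq] <;> ring_nf
      rw [Finset.prod_congr rfl (fun k _ => this k), Finset.prod_const]
      simp
    calc ∑ ω : Fin N → Bool, ∑ ω' : Fin N → Bool,
          (1 + t * ∑ k : Fin N, e (ω k) * e (ω' k)) ^ n
        ≤ ∑ ω : Fin N → Bool, ∑ ω' : Fin N → Bool,
            ∏ k : Fin N, Real.exp (n * t * (e (ω k) * e (ω' k))) := by
          apply Finset.sum_le_sum; intro ω _
          apply Finset.sum_le_sum; intro ω' _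
          exact key ω ω'
      _ = ∑ ω : Fin N → Bool, ((2:ℝ) * Real.cosh (n * t)) ^ N := by
          apply Finset.sum_congr rfl; intro ω _; exact step1 ω
      _ = (2:ℝ)^N * ((2:ℝ) * Real.cosh (n * t)) ^ N := by
          rw [Finset.sum_const]
          simp [Finset.card_univ]
  have h4 : ((2:ℝ) ^ (2*N))⁻¹ * ((2:ℝ)^N * ((2:ℝ) * Real.cosh (n * t)) ^ N)
      = Real.cosh (n * t) ^ N := by
    rw [mul_pow, two_mul, pow_add]
    field_simp
  calc ((2 : ℝ) ^ (2 * N))⁻¹ *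
      ∑ ω : Fin N → Bool, ∑ ω' : Fin N → Bool,
        (1 + t * ∑ k : Fin N, e (ω k) * e (ω' k)) ^ n
      ≤ ((2 : ℝ) ^ (2 * N))⁻¹ * ((2:ℝ)^N * ((2:ℝ) * Real.cosh (n * t)) ^ N) := by
        apply mul_le_mul_of_nonneg_left hsum
        positivity
    _ = Real.cosh (n * t) ^ N := h4
end

section
/- Let d ≥ 1, R > 0, and let ψ : ℝ^d → ℝ be bounded and supported in [−R,R]^d. For l ≥ 0 and k ∈ ℤ^d set ψ_{lk}(x) := 2^{ld/2} ψ(2^l x − k). Let α, β > 0, L ≥ 0 and let f : ℝ^d → [0,∞) be measurable with ∫_{ℝ^d} e^{β‖x‖^α} f(x) dx ≤ L (Euclidean norm). Then for every l ≥ 0 and every κ ≥ 2R: Σ_{k ∈ ℤ^d, ‖k‖_∞ > 2^l κ} | ∫_{ℝ^d} ψ_{lk}(x) f(x) dx | ≤ (2R+1)^d ‖ψ‖_∞ · 2^{ld/2} · L e^{−β(κ/2)^α}. -/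
open MeasureTheory

/-- wavelet-coefficient tail bound under an exponential moment.
`ψ` is bounded (by `Cψ`, playing the role of `‖ψ‖_∞`) and supported in `[−R,R]^d`;
`ψ_{lk}(x) := 2^{ld/2} ψ(2^l x − k)`.  If `∫ e^{β‖x‖^α} f ≤ L` (Euclidean norm,
integral taken as a Lebesgue integral in `ℝ≥0∞` so that `+∞` is allowed), then for
every `l ≥ 0` and `κ ≥ 2R`, the sum of `|∫ ψ_{lk} f|` over `‖k‖_∞ > 2^l κ` is at most
`(2R+1)^d ‖ψ‖_∞ 2^{ld/2} L e^{−β(κ/2)^α}`. -/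
theorem stmt8 (d : ℕ) (hd : 1 ≤ d) (R : ℝ) (hR : 0 < R)
    (ψ : (Fin d → ℝ) → ℝ) (Cψ : ℝ) (hψm : Measurable ψ) (hψbd : ∀ x, |ψ x| ≤ Cψ)
    (hsupp : ∀ x, ψ x ≠ 0 → ∀ i, |x i| ≤ R)
    (α β L : ℝ) (hα : 0 < α) (hβ : 0 < β) (hL : 0 ≤ L)
    (f : (Fin d → ℝ) → ℝ) (hfm : Measurable f) (hf0 : 0 ≤ f)
    (hmom : ∫⁻ x : Fin d → ℝ,
        ENNReal.ofReal (Real.exp (β * Real.sqrt (∑ i, x i ^ 2) ^ α) * f x)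
      ≤ ENNReal.ofReal L)
    (l : ℕ) (κ : ℝ) (hκ : 2 * R ≤ κ) :
    (∑' k : Fin d → ℤ,
        if (2 : ℝ) ^ l * κ < ((Finset.univ.sup fun i => (k i).natAbs : ℕ) : ℝ) then
          |∫ x : Fin d → ℝ,
            (Real.sqrt ((2 : ℝ) ^ (l * d)) * ψ (fun i => 2 ^ l * x i - (k i : ℝ))) * f x|
        else 0)
      ≤ (2 * R + 1) ^ d * Cψ * Real.sqrt ((2 : ℝ) ^ (l * d)) * L *
          Real.exp (-β * (κ / 2) ^ α) := by
  classical
  have hκ0 : 0 < κ := lt_of_lt_of_le (by linarith) hκ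
  have hCψ0 : 0 ≤ Cψ := le_trans (abs_nonneg _) (hψbd 0)
  set sq : ℝ := Real.sqrt ((2 : ℝ) ^ (l * d)) with hsq
  have hsq0 : 0 ≤ sq := Real.sqrt_nonneg _
  set c : ℝ := sq * Cψ * Real.exp (-β * (κ / 2) ^ α) with hcdef
  have hc0 : 0 ≤ c := by positivity
  set h : (Fin d → ℝ) → ℝ := fun x => Real.exp (β * Real.sqrt (∑ i, x i ^ 2) ^ α) * f x
    with hhdef
  have hh0 : ∀ x, 0 ≤ h x := fun x => mul_nonneg (Real.exp_pos _).le (hf0 x)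
  have hfh : ∀ x, f x ≤ h x := by
    intro x
    exact le_mul_of_one_le_left (hf0 x)
      (Real.one_le_exp (mul_nonneg hβ.le (Real.rpow_nonneg (Real.sqrt_nonneg _) _)))
  have hhm : Measurable h := by
    apply Measurable.mul _ hfm
    have hcont : Continuous fun x : Fin d → ℝ => Real.sqrt (∑ i, x i ^ 2) := by
      exact (continuous_finset_sum _ fun i _ => (continuous_apply i).pow 2).sqrt
    exact (Real.continuous_exp.comp
      (continuous_const.mul (hcont.rpow_const fun x => Or.inr hα.le))).measurable
  have hint : Integrable h := by
    refine ⟨hhm.aestronglyMeasurable, ?_⟩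
    rw [hasFiniteIntegral_iff_ofReal (Filter.Eventually.of_forall hh0)]
    exact lt_of_le_of_lt hmom ENNReal.ofReal_lt_top
  have hIh : ∫ x, h x ≤ L := by
    rw [integral_eq_lintegral_of_nonneg_ae (Filter.Eventually.of_forall hh0)
      hhm.aestronglyMeasurable]
    exact ENNReal.toReal_le_of_le_ofReal hL hmom
  have hIh0 : 0 ≤ ∫ x, h x := integral_nonneg hh0
  -- the support cubes
  set S : (Fin d → ℤ) → Set (Fin d → ℝ) :=
    fun k => {x | ∀ i, |(2 : ℝ) ^ l * x i - (k i : ℝ)| ≤ R} with hSdef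
  have hSm : ∀ k, MeasurableSet (S k) := by
    intro k
    have : S k = ⋂ i, {x : Fin d → ℝ | |(2 : ℝ) ^ l * x i - (k i : ℝ)| ≤ R} := by
      ext x; simp [hSdef, Set.mem_iInter]
    rw [this]
    exact MeasurableSet.iInter fun i =>
      measurableSet_le (((measurable_pi_apply i).const_mul _).sub_const _).abs measurable_const
  -- integrand and its properties
  set F : (Fin d → ℤ) → (Fin d → ℝ) → ℝ :=
    fun k x => (sq * ψ (fun i => 2 ^ l * x i - (k i : ℝ))) * f x with hFdef
  have hFm : ∀ k, Measurable (F k) := by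
    intro k
    exact ((hψm.comp (measurable_pi_lambda _ fun i =>
      ((measurable_pi_apply i).const_mul _).sub_const _)).const_mul sq).mul hfm
  have hFint : ∀ k, Integrable (F k) := by
    intro k
    refine Integrable.mono' (hint.const_mul (sq * Cψ)) (hFm k).aestronglyMeasurable
      (Filter.Eventually.of_forall fun x => ?_)
    rw [Real.norm_eq_abs, hFdef]
    simp only
    rw [abs_mul, abs_mul, abs_of_nonneg hsq0, abs_of_nonneg (hf0 x)]
    have h1 : |ψ fun i => 2 ^ l * x i - (k i : ℝ)| ≤ Cψ := hψbd _
    have h2 : f x ≤ h x := hfh x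
    exact mul_le_mul (mul_le_mul_of_nonneg_left h1 hsq0) h2 (hf0 x)
      (mul_nonneg hsq0 hCψ0)
  -- key pointwise bound for "far" k
  haveI : Nonempty (Fin d) := ⟨⟨0, hd⟩⟩
  have key : ∀ k : Fin d → ℤ,
      ((2 : ℝ) ^ l * κ < ((Finset.univ.sup fun i => (k i).natAbs : ℕ) : ℝ)) →
      |∫ x, F k x| ≤ c * ∫ x, (S k).indicator h x := by
    intro k hk
    have hpt : ∀ x, |F k x| ≤ c * (S k).indicator h x := by
      intro x
      by_cases hz : ψ (fun i => 2 ^ l * x i - (k i : ℝ)) = 0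
      · rw [hFdef]
        simp only [hz, mul_zero, zero_mul, abs_zero]
        exact mul_nonneg hc0 (Set.indicator_nonneg (fun y _ => hh0 y) x)
      · have hx : ∀ i, |(2 : ℝ) ^ l * x i - (k i : ℝ)| ≤ R := hsupp _ hz
        have hmem : x ∈ S k := hx
        rw [Set.indicator_of_mem hmem]
        -- norm lower bound: κ/2 ≤ ‖x‖₂
        obtain ⟨i₀, -, hi₀⟩ := Finset.exists_mem_eq_sup Finset.univ Finset.univ_nonempty
          (fun i => (k i).natAbs)
        have hk' : (2 : ℝ) ^ l * κ < ((k i₀).natAbs : ℝ) := by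
          rw [hi₀] at hk; exact_mod_cast hk
        have hkabs : ((k i₀).natAbs : ℝ) = |((k i₀ : ℤ) : ℝ)| := by
          rw [Nat.cast_natAbs]; push_cast; ring
        have hpl : (0 : ℝ) < 2 ^ l := by positivity
        have hpl1 : (1 : ℝ) ≤ 2 ^ l := one_le_pow₀ (by norm_num)
        have habs : |(2 : ℝ) ^ l * x i₀| ≥ |((k i₀ : ℤ) : ℝ)| - R := by
          have t1 : |((k i₀ : ℤ) : ℝ)| - |(2 : ℝ) ^ l * x i₀|
              ≤ |((k i₀ : ℤ) : ℝ) - (2 : ℝ) ^ l * x i₀| := abs_sub_abs_le_abs_sub _ _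
          have t2 : |((k i₀ : ℤ) : ℝ) - (2 : ℝ) ^ l * x i₀|
              = |(2 : ℝ) ^ l * x i₀ - (k i₀ : ℝ)| := abs_sub_comm _ _
          have t3 := hx i₀
          push_cast at t1 t2 ⊢
          linarith
        have hx0 : κ / 2 ≤ |x i₀| := by
          have hRκ : R ≤ 2 ^ l * (κ / 2) := by nlinarith
          have : 2 ^ l * (κ / 2) ≤ |(2 : ℝ) ^ l * x i₀| := by
            rw [hkabs] at hk'; nlinarith
          rw [abs_mul, abs_of_pos hpl] at this
          nlinarith
        have hnorm : κ / 2 ≤ Real.sqrt (∑ i, x i ^ 2) := by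
          have h1 : x i₀ ^ 2 ≤ ∑ i, x i ^ 2 :=
            Finset.single_le_sum (fun i _ => sq_nonneg (x i)) (Finset.mem_univ i₀)
          calc κ / 2 ≤ |x i₀| := hx0
            _ = Real.sqrt (x i₀ ^ 2) := (Real.sqrt_sq_eq_abs _).symm
            _ ≤ Real.sqrt (∑ i, x i ^ 2) := Real.sqrt_le_sqrt h1
        -- exponential bound
        have hexp : Real.exp (β * (κ / 2) ^ α) ≤ Real.exp (β * Real.sqrt (∑ i, x i ^ 2) ^ α) :=
          Real.exp_le_exp.2 (mul_le_mul_of_nonneg_left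
            (Real.rpow_le_rpow (by positivity) hnorm hα.le) hβ.le)
        have hfx : f x ≤ Real.exp (-β * (κ / 2) ^ α) * h x := by
          have e1 : Real.exp (-β * (κ / 2) ^ α) * Real.exp (β * (κ / 2) ^ α) = 1 := by
            rw [← Real.exp_add]; ring_nf; exact Real.exp_zero
          have e2 : Real.exp (β * (κ / 2) ^ α) * f x ≤ h x :=
            mul_le_mul_of_nonneg_right hexp (hf0 x)
          calc f x = Real.exp (-β * (κ / 2) ^ α) * (Real.exp (β * (κ / 2) ^ α) * f x) := by
                rw [← mul_assoc, e1, one_mul]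
            _ ≤ Real.exp (-β * (κ / 2) ^ α) * h x :=
                mul_le_mul_of_nonneg_left e2 (Real.exp_pos _).le
        rw [hFdef]
        simp only
        rw [abs_mul, abs_mul, abs_of_nonneg hsq0, abs_of_nonneg (hf0 x), hcdef]
        have h1 : |ψ fun i => 2 ^ l * x i - (k i : ℝ)| ≤ Cψ := hψbd _
        calc sq * |ψ fun i => 2 ^ l * x i - (k i : ℝ)| * f x
            ≤ sq * Cψ * f x :=
              mul_le_mul_of_nonneg_right (mul_le_mul_of_nonneg_left h1 hsq0) (hf0 x)
          _ ≤ sq * Cψ * (Real.exp (-β * (κ / 2) ^ α) * h x) :=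
              mul_le_mul_of_nonneg_left hfx (mul_nonneg hsq0 hCψ0)
          _ = sq * Cψ * Real.exp (-β * (κ / 2) ^ α) * h x := by ring
    calc |∫ x, F k x| ≤ ∫ x, |F k x| := by
          simpa [Real.norm_eq_abs] using norm_integral_le_integral_norm (F k)
      _ ≤ ∫ x, c * (S k).indicator h x :=
          integral_mono (hFint k).abs ((hint.indicator (hSm k)).const_mul c) hpt
      _ = c * ∫ x, (S k).indicator h x := integral_const_mul c _
  -- multiplicity bound
  have mult : ∀ (s : Finset (Fin d → ℤ)) (x : Fin d → ℝ),
      (∑ k ∈ s, (S k).indicator h x) ≤ (2 * R + 1) ^ d * h x := by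
    intro s x
    have step1 : (∑ k ∈ s, (S k).indicator h x)
        = ((s.filter fun k => x ∈ S k).card : ℝ) * h x := by
      rw [Finset.card_filter]
      push_cast
      rw [Finset.sum_mul]
      refine Finset.sum_congr rfl fun k _ => ?_
      by_cases hm : x ∈ S k
      · simp [Set.indicator_of_mem hm, hm]
      · simp [Set.indicator_of_notMem hm, hm]
    rw [step1]
    have hcard : ((s.filter fun k => x ∈ S k).card : ℝ) ≤ (2 * R + 1) ^ d := by
      set T : Finset (Fin d → ℤ) := Fintype.piFinset fun i =>
        Finset.Icc ⌈(2 : ℝ) ^ l * x i - R⌉ ⌊(2 : ℝ) ^ l * x i + R⌋ with hT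
      have hsub : (s.filter fun k => x ∈ S k) ⊆ T := by
        intro k hk
        rw [Finset.mem_filter] at hk
        rw [hT, Fintype.mem_piFinset]
        intro i
        rw [Finset.mem_Icc]
        have := abs_le.1 (hk.2 i)
        exact ⟨Int.ceil_le.2 (by linarith [this.2]),
          Int.le_floor.2 (by linarith [this.1])⟩
      calc ((s.filter fun k => x ∈ S k).card : ℝ) ≤ (T.card : ℝ) := by
            exact_mod_cast Finset.card_le_card hsub
        _ ≤ (2 * R + 1) ^ d := by
            rw [hT, Fintype.card_piFinset]
            push_cast
            calc (∏ i, ((Finset.Icc ⌈(2 : ℝ) ^ l * x i - R⌉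
                    ⌊(2 : ℝ) ^ l * x i + R⌋).card : ℝ))
                ≤ ∏ _i : Fin d, (2 * R + 1) := by
                  refine Finset.prod_le_prod (fun i _ => by positivity) fun i _ => ?_
                  rw [Int.card_Icc]
                  set a : ℤ := ⌈(2 : ℝ) ^ l * x i - R⌉ with ha
                  set b : ℤ := ⌊(2 : ℝ) ^ l * x i + R⌋ with hb
                  rcases le_or_gt (b + 1 - a) 0 with h0 | h0
                  · rw [Int.toNat_of_nonpos h0]
                    norm_num; linarith
                  · have := Int.toNat_of_nonneg h0.le
                    have e1 : ((b + 1 - a).toNat : ℝ) = ((b : ℝ) + 1 - (a : ℝ)) := by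
                      exact_mod_cast congrArg (fun z : ℤ => (z : ℝ)) this
                    rw [e1]
                    have hfl : (b : ℝ) ≤ (2 : ℝ) ^ l * x i + R := Int.floor_le _
                    have hce : (2 : ℝ) ^ l * x i - R ≤ (a : ℝ) := Int.le_ceil _
                    linarith
              _ = (2 * R + 1) ^ d := by
                  rw [Finset.prod_const, Finset.card_univ, Fintype.card_fin]
    exact mul_le_mul_of_nonneg_right hcard (hh0 x)
  -- assemble
  have hRHS0 : 0 ≤ (2 * R + 1) ^ d * Cψ * sq * L * Real.exp (-β * (κ / 2) ^ α) := by
    positivity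
  refine tsum_le_of_sum_le' hRHS0 ?_
  intro s
  rw [← Finset.sum_filter]
  set s' := s.filter fun k : Fin d → ℤ =>
    (2 : ℝ) ^ l * κ < ((Finset.univ.sup fun i => (k i).natAbs : ℕ) : ℝ) with hs'
  calc (∑ k ∈ s', |∫ x, F k x|)
      ≤ ∑ k ∈ s', c * ∫ x, (S k).indicator h x :=
        Finset.sum_le_sum fun k hk => key k (Finset.mem_filter.1 hk).2
    _ = c * ∫ x, ∑ k ∈ s', (S k).indicator h x := by
        rw [← Finset.mul_sum, ← integral_finset_sum _ fun k _ => hint.indicator (hSm k)]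
    _ ≤ c * ((2 * R + 1) ^ d * ∫ x, h x) := by
        refine mul_le_mul_of_nonneg_left ?_ hc0
        rw [← integral_const_mul]
        exact integral_mono (integrable_finset_sum _ fun k _ => hint.indicator (hSm k))
          (hint.const_mul _) (mult s')
    _ ≤ c * ((2 * R + 1) ^ d * L) := by
        refine mul_le_mul_of_nonneg_left (mul_le_mul_of_nonneg_left hIh (by positivity)) hc0
    _ = (2 * R + 1) ^ d * Cψ * sq * L * Real.exp (-β * (κ / 2) ^ α) := by
        rw [hcdef]; ring
end

section
/- Let (X,𝒜) be a measurable space, Θ a set equipped with a pseudometric w, and for each θ ∈ Θ let P_θ be a probability measure on X; write P^n_θ for the n-fold product measure on X^n. Let Σ₀, Σ₁ ⊆ Θ and for ρ > 0 set Σ₁(ρ) := {θ ∈ Σ₁ : inf_{θ₀∈Σ₀} w(θ,θ₀) ≥ ρ}. Suppose there are ρ*_n > 0 and β > 0 such that for every sequence ρ_n with ρ_n/ρ*_n → 0: liminf_n inf_{Ψ_n} [ sup_{θ∈Σ₀} E_{P^n_θ}[Ψ_n] + sup_{θ∈Σ₁(ρ_n)} E_{P^n_θ}[1−Ψ_n]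 ] ≥ β, the infimum running over measurable tests Ψ_n : X^n → {0,1}. Let r̃_n(s), r̃_n(r) > 0 satisfy r̃_n(s)/ρ*_n → 0 and r̃_n(s)/r̃_n(r) → 0, let L > 0, and let α, α' > 0 with 0 < 2α + α' < β. Then for every sequence ρ_n with ρ_n/ρ*_n → 0 there exists no sequence of set-valued maps C_n : X^n → subsets of Θ — such that for every θ ∈ Θ the event {θ ∈ C_n}, the events {|C_n|_w > L r̃_n(r)} and {|C_n|_w > L r̃_n(s)}, and for every ρ > 0 the event {C_n ∩ Σ₁(ρ) ≠ ∅} are measurable, where |C_n|_w := sup_{θ,θ'∈C_n} w(θ,θ') — satisfying simultaneously: (i) liminf_n inf_{θ ∈ Σ₀ ∪ Σ₁(ρ_n)} P^n_θ(θ ∈ C_n) ≥ 1 − α; (ii) limsup_n sup_{θ ∈ Σ₁(ρ_n)} P^n_θ(|C_n|_w > L r̃_n(r)) ≤ α'; and (iii) limsup_n sup_{θ ∈ Σ₀} P^n_θ(|C_n|_w > L r̃_n(s)) ≤ α'. -/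
/-!
Confidence sets as tests: put `Ψ_n = 1{C_n ∩ Σ₁(ρ'_n) ≠ ∅}` with `ρ'_n = ρ_n + L r̃_n(s)`, which is
still `o(ρ*_n)`. Under `θ ∈ Σ₁(ρ'_n) ⊆ Σ₁(ρ_n)`, the test accepts only if `θ ∉ C_n`, with
probability at most `α` asymptotically. Under `θ ∈ Σ₀`, if `θ ∈ C_n` and `|C_n|_w ≤ L r̃_n(s) < ρ'_n`,
then `C_n` cannot reach `Σ₁(ρ'_n)`, so the test rejects with probability at most `α + α'`. The total
error `2α + α' < β` contradicts the testing lower bound along `ρ'_n`.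
-/

open MeasureTheory Filter
open scoped ENNReal

/-- The `w`-diameter of a subset of `Θ`, valued in `ℝ≥0∞`. -/
noncomputable def wDiam {Θ : Type*} (w : Θ → Θ → ℝ) (C : Set Θ) : ℝ≥0∞ :=
  ⨆ a ∈ C, ⨆ b ∈ C, ENNReal.ofReal (w a b)

/-- The `ρ`-separated alternative `S₁(ρ) = {θ ∈ S₁ : inf_{θ₀∈S₀} w(θ,θ₀) ≥ ρ}`. -/
def sepSet {Θ : Type*} (w : Θ → Θ → ℝ) (S₀ S₁ : Set Θ) (ρ : ℝ) : Set Θ :=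
  {θ ∈ S₁ | ∀ θ₀ ∈ S₀, ρ ≤ w θ θ₀}

section Separation

variable {Θ : Type*} (w : Θ → Θ → ℝ)

lemma ofReal_le_wDiam {C : Set Θ} {a b : Θ} (ha : a ∈ C) (hb : b ∈ C) :
    ENNReal.ofReal (w a b) ≤ wDiam w C :=
  le_iSup₂_of_le a ha (le_iSup₂_of_le b hb le_rfl)

lemma sepSet_anti (S₀ S₁ : Set Θ) : Antitone (sepSet w S₀ S₁) :=
  fun _ _ h _ hθ => ⟨hθ.1, fun θ₀ h₀ => h.trans (hθ.2 θ₀ h₀)⟩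

lemma ofReal_lt_wDiam_of_mem_sepSet {S₀ S₁ C : Set Θ} {r ρ : ℝ} (hρ : 0 < ρ) (hrρ : r < ρ)
    {θ₀ θ : Θ} (hθ₀ : θ₀ ∈ S₀ ∩ C) (hθ : θ ∈ C ∩ sepSet w S₀ S₁ ρ) :
    ENNReal.ofReal r < wDiam w C :=
  calc ENNReal.ofReal r < ENNReal.ofReal ρ := (ENNReal.ofReal_lt_ofReal_iff hρ).2 hrρ
    _ ≤ ENNReal.ofReal (w θ θ₀) := ENNReal.ofReal_le_ofReal (hθ.2.2 θ₀ hθ₀.1)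
    _ ≤ wDiam w C := ofReal_le_wDiam w hθ.1 hθ₀.2

end Separation

section Testing

variable {Ω Θ : Type*}

open Classical in
noncomputable def meetsTest (C : Ω → Set Θ) (A : Set Θ) (ω : Ω) : Bool :=
  decide (C ω ∩ A).Nonempty

open Classical in
lemma meetsTest_eq_true {C : Ω → Set Θ} {A : Set Θ} {ω : Ω} :
    meetsTest C A ω = true ↔ (C ω ∩ A).Nonempty :=
  decide_eq_true_iff

variable [MeasurableSpace Ω]

noncomputable def testRisk (μ : Θ → Measure Ω) (S₀ A : Set Θ) (Ψ : Ω → Bool) : ℝ≥0∞ :=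
  (⨆ θ ∈ S₀, μ θ {ω | Ψ ω = true}) + ⨆ θ ∈ A, μ θ {ω | Ψ ω = false}

noncomputable def coverage (μ : Θ → Measure Ω) (C : Ω → Set Θ) (S : Set Θ) : ℝ≥0∞ :=
  ⨅ θ ∈ S, μ θ {ω | θ ∈ C ω}

lemma measurable_meetsTest {C : Ω → Set Θ} {A : Set Θ}
    (h : MeasurableSet {ω | (C ω ∩ A).Nonempty}) : Measurable (meetsTest C A) :=
  measurable_to_bool (by simpa [meetsTest, Set.preimage] using h)

variable {C : Ω → Set Θ} {θ : Θ}

lemma measure_meetsTest_eq_false_le (μ : Measure Ω) [IsProbabilityMeasure μ] {A : Set Θ} (hC : MeasurableSet {ω | θ ∈ C ω})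
    (hθ : θ ∈ A) : μ {ω | meetsTest C A ω = false} ≤ 1 - μ {ω | θ ∈ C ω} := by
  rw [← prob_compl_eq_one_sub hC]
  exact measure_mono fun ω hω hθC =>
    Bool.eq_false_iff.1 hω (meetsTest_eq_true.2 ⟨θ, hθC, hθ⟩)

lemma measure_meetsTest_eq_true_le (μ : Measure Ω) [IsProbabilityMeasure μ] (w : Θ → Θ → ℝ)
    {S₀ S₁ : Set Θ} {r ρ : ℝ} (hρ : 0 < ρ) (hrρ : r < ρ) (hC : MeasurableSet {ω | θ ∈ C ω}) (hθ : θ ∈ S₀) :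
    μ {ω | meetsTest C (sepSet w S₀ S₁ ρ) ω = true}
      ≤ (1 - μ {ω | θ ∈ C ω}) + μ {ω | ENNReal.ofReal r < wDiam w (C ω)} := by
  rw [← prob_compl_eq_one_sub hC]
  refine (measure_mono fun ω hω => ?_).trans (measure_union_le _ _)
  obtain ⟨θ', hθ'⟩ := meetsTest_eq_true.1 hω
  exact (em (θ ∈ C ω)).symm.imp id
    fun hθC => ofReal_lt_wDiam_of_mem_sepSet w hρ hrρ ⟨hθ, hθC⟩ hθ'

lemma testRisk_meetsTest_le (μ : Θ → Measure Ω) [∀ θ, IsProbabilityMeasure (μ θ)]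
    (w : Θ → Θ → ℝ) (S₀ S₁ : Set Θ) (hC : ∀ θ, MeasurableSet {ω | θ ∈ C ω})
    {r ρ₀ ρ : ℝ} (hρ : 0 < ρ) (hrρ : r < ρ) (hρ₀ : ρ₀ ≤ ρ) :
    testRisk μ S₀ (sepSet w S₀ S₁ ρ) (meetsTest C (sepSet w S₀ S₁ ρ))
      ≤ (1 - coverage μ C (S₀ ∪ sepSet w S₀ S₁ ρ₀))
        + (⨆ θ ∈ S₀, μ θ {ω | ENNReal.ofReal r < wDiam w (C ω)})
        + (1 - coverage μ C (S₀ ∪ sepSet w S₀ S₁ ρ₀)) := by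
  have hcov {θ} (hθ : θ ∈ S₀ ∪ sepSet w S₀ S₁ ρ₀) :
      1 - μ θ {ω | θ ∈ C ω} ≤ 1 - coverage μ C (S₀ ∪ sepSet w S₀ S₁ ρ₀) :=
    tsub_le_tsub_left (iInf₂_le θ hθ) (1 : ℝ≥0∞)
  refine add_le_add (iSup₂_le fun θ hθ => ?_) (iSup₂_le fun θ hθ => ?_)
  · exact (measure_meetsTest_eq_true_le (μ θ) w hρ hrρ (hC θ) hθ).trans
      (add_le_add (hcov (Or.inl hθ)) (le_iSup₂_of_le θ hθ le_rfl))
  · exact (measure_meetsTest_eq_false_le (μ θ) (hC θ) hθ).trans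
      (hcov (Or.inr (sepSet_anti w S₀ S₁ hρ₀ hθ)))

end Testing

theorem ENNReal.limsup_add_le' {ι : Type*} (F : Filter ι) (u v : ι → ℝ≥0∞) :
    limsup (u + v) F ≤ limsup u F + limsup v F := by
  refine ENNReal.le_of_forall_pos_le_add fun ε hε hlt => ?_
  have hε2 : (ε / 2 : ℝ≥0∞) ≠ 0 := by simpa using hε.ne'
  have hu := eventually_lt_of_limsup_lt
    (ENNReal.lt_add_right (lt_of_le_of_lt le_self_add hlt).ne hε2)
  have hv := eventually_lt_of_limsup_lt
    (ENNReal.lt_add_right (lt_of_le_of_lt le_add_self hlt).ne hε2)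
  refine limsup_le_of_le (by isBoundedDefault) ?_
  filter_upwards [hu, hv] with i hui hvi
  calc u i + v i ≤ (limsup u F + ε / 2) + (limsup v F + ε / 2) := add_le_add hui.le hvi.le
    _ = limsup u F + limsup v F + ε := by rw [add_add_add_comm, ENNReal.add_halves]

lemma limsup_one_sub_le_ofReal {ι : Type*} {F : Filter ι} {c : ι → ℝ≥0∞} {α : ℝ}
    (h : ENNReal.ofReal (1 - α) ≤ liminf c F) :
    limsup (fun i => 1 - c i) F ≤ ENNReal.ofReal α := by
  rw [ENNReal.limsup_const_sub F c ENNReal.one_ne_top, tsub_le_iff_right]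
  calc (1 : ℝ≥0∞) = ENNReal.ofReal (α + (1 - α)) := by simp
    _ ≤ ENNReal.ofReal α + ENNReal.ofReal (1 - α) := ENNReal.ofReal_add_le
    _ ≤ ENNReal.ofReal α + liminf c F := add_le_add_right h _

lemma limsup_le_of_le_one_sub_add {ι : Type*} {F : Filter ι}
    {u c d : ι → ℝ≥0∞} {α α' : ℝ} (hα : 0 ≤ α) (hα' : 0 ≤ α')
    (hu : ∀ i, u i ≤ (1 - c i) + d i + (1 - c i))
    (hc : ENNReal.ofReal (1 - α) ≤ liminf c F) (hd : limsup d F ≤ ENNReal.ofReal α') :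
    limsup u F ≤ ENNReal.ofReal (2 * α + α') := by
  have hc' := limsup_one_sub_le_ofReal hc
  calc limsup u F ≤ limsup (fun i => 1 - c i) F + limsup d F + limsup (fun i => 1 - c i) F :=
        (limsup_le_limsup (Eventually.of_forall hu)).trans
          ((ENNReal.limsup_add_le' F _ _).trans
            (add_le_add_left (ENNReal.limsup_add_le' F _ _) _))
    _ ≤ ENNReal.ofReal α + ENNReal.ofReal α' + ENNReal.ofReal α := by gcongr
    _ = ENNReal.ofReal (2 * α + α') := by
        rw [← ENNReal.ofReal_add hα hα', ← ENNReal.ofReal_add (by positivity) hα]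
        congr 1
        ring

theorem stmt19_general {X : Type*} [MeasurableSpace X] {Θ : Type*}
    (w : Θ → Θ → ℝ)
    (P : Θ → Measure X) (hP : ∀ θ, IsProbabilityMeasure (P θ))
    (S₀ S₁ : Set Θ)
    (ρstar : ℕ → ℝ)
    (β : ℝ)
    (htest : ∀ ρseq : ℕ → ℝ, (∀ n, 0 < ρseq n) →
      Tendsto (fun n => ρseq n / ρstar n) atTop (nhds 0) →
      ENNReal.ofReal β ≤
        liminf (fun n : ℕ =>
          ⨅ Ψ : {Ψ : (Fin n → X) → Bool // Measurable Ψ},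
            ((⨆ θ ∈ S₀,
                Measure.pi (fun _ : Fin n => P θ) {ω | Ψ.1 ω = true}) +
              ⨆ θ ∈ sepSet w S₀ S₁ (ρseq n),
                Measure.pi (fun _ : Fin n => P θ) {ω | Ψ.1 ω = false})) atTop)
    (rs rr : ℕ → ℝ) (hrs : ∀ n, 0 < rs n)
    (hrsρ : Tendsto (fun n => rs n / ρstar n) atTop (nhds 0))
    (L : ℝ) (hL : 0 < L)
    (α α' : ℝ) (hα : 0 < α) (hα' : 0 < α') (hαβ : 2 * α + α' < β)
    (ρseq : ℕ → ℝ) (hρ : ∀ n, 0 < ρseq n)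
    (hρρ : Tendsto (fun n => ρseq n / ρstar n) atTop (nhds 0)) :
    ¬ ∃ C : (n : ℕ) → (Fin n → X) → Set Θ,
        (∀ (n : ℕ) (θ : Θ), MeasurableSet {ω : Fin n → X | θ ∈ C n ω}) ∧
        (∀ n : ℕ, MeasurableSet
          {ω : Fin n → X | ENNReal.ofReal (L * rr n) < wDiam w (C n ω)}) ∧
        (∀ n : ℕ, MeasurableSet
          {ω : Fin n → X | ENNReal.ofReal (L * rs n) < wDiam w (C n ω)}) ∧
        (∀ (n : ℕ) (ρ : ℝ), 0 < ρ → MeasurableSet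
          {ω : Fin n → X | (C n ω ∩ sepSet w S₀ S₁ ρ).Nonempty}) ∧
        (ENNReal.ofReal (1 - α) ≤
          liminf (fun n : ℕ =>
            ⨅ θ ∈ S₀ ∪ sepSet w S₀ S₁ (ρseq n),
              Measure.pi (fun _ : Fin n => P θ) {ω | θ ∈ C n ω}) atTop) ∧
        (limsup (fun n : ℕ =>
            ⨆ θ ∈ sepSet w S₀ S₁ (ρseq n),
              Measure.pi (fun _ : Fin n => P θ)
                {ω | ENNReal.ofReal (L * rr n) < wDiam w (C n ω)}) atTop
          ≤ ENNReal.ofReal α') ∧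
        (limsup (fun n : ℕ =>
            ⨆ θ ∈ S₀,
              Measure.pi (fun _ : Fin n => P θ)
                {ω | ENNReal.ofReal (L * rs n) < wDiam w (C n ω)}) atTop
          ≤ ENNReal.ofReal α') := by
  rintro ⟨C, hmemC, -, -, hmeets, hcov, -, hS⟩
  have := hP
  set ρ' : ℕ → ℝ := fun n => ρseq n + L * rs n
  have hLrs (n : ℕ) : 0 < L * rs n := mul_pos hL (hrs n)
  have hρ' (n : ℕ) : 0 < ρ' n := add_pos (hρ n) (hLrs n)
  have hρ'ρ : Tendsto (fun n => ρ' n / ρstar n) atTop (nhds 0) := by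
    simpa [ρ', add_div, mul_div_assoc] using hρρ.add (hrsρ.const_mul L)
  have hrisk (n : ℕ) := testRisk_meetsTest_le (fun θ => Measure.pi fun _ : Fin n => P θ) w S₀ S₁
    (hmemC n) (hρ' n) (lt_add_of_pos_left _ (hρ n)) (le_add_of_nonneg_right (hLrs n).le)
  have hle : ENNReal.ofReal β ≤ ENNReal.ofReal (2 * α + α') :=
    calc ENNReal.ofReal β ≤ _ := htest ρ' hρ' hρ'ρ
      _ ≤ liminf (fun n => testRisk (fun θ => Measure.pi fun _ : Fin n => P θ) S₀
            (sepSet w S₀ S₁ (ρ' n)) (meetsTest (C n) (sepSet w S₀ S₁ (ρ' n)))) atTop :=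
        liminf_le_liminf (Eventually.of_forall fun n =>
          iInf_le_of_le ⟨_, measurable_meetsTest (hmeets n _ (hρ' n))⟩ le_rfl)
      _ ≤ _ := liminf_le_limsup
      _ ≤ _ := limsup_le_of_le_one_sub_add hα.le hα'.le hrisk hcov hS
  linarith [(ENNReal.ofReal_le_ofReal_iff (by positivity)).1 hle]

/-- abstract nonexistence of adaptive honest confidence sets (Lemma 3.2 of the
paper in decision-theoretic form).  If the minimax testing problem `S₀` vs `S₁(ρ_n)` has the
lower bound `β` along every separation sequence of smaller order than `ρ*_n`, and
`r̃_n(s) = o(ρ*_n)`, `r̃_n(s) = o(r̃_n(r))`, `0 < 2α + α' < β`, then for every `ρ_n = o(ρ*_n)`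
there is no sequence of (suitably measurable) confidence sets `C_n` that is honest at level
`1−α` over `S₀ ∪ S₁(ρ_n)` and whose `w`-diameter shrinks at rate `L r̃_n(r)` on `S₁(ρ_n)`
and at rate `L r̃_n(s)` on `S₀`, with error probabilities at most `α'`. -/
theorem stmt19 {X : Type*} [MeasurableSpace X] {Θ : Type*}
    (w : Θ → Θ → ℝ)
    (hw_self : ∀ θ, w θ θ = 0) (hw_nonneg : ∀ θ θ', 0 ≤ w θ θ')
    (hw_symm : ∀ θ θ', w θ θ' = w θ' θ)
    (hw_tri : ∀ a b c, w a c ≤ w a b + w b c)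
    (P : Θ → Measure X) (hP : ∀ θ, IsProbabilityMeasure (P θ))
    (S₀ S₁ : Set Θ)
    (ρstar : ℕ → ℝ) (hρstar : ∀ n, 0 < ρstar n)
    (β : ℝ) (hβ : 0 < β)
    (htest : ∀ ρseq : ℕ → ℝ, (∀ n, 0 < ρseq n) →
      Tendsto (fun n => ρseq n / ρstar n) atTop (nhds 0) →
      ENNReal.ofReal β ≤
        liminf (fun n : ℕ =>
          ⨅ Ψ : {Ψ : (Fin n → X) → Bool // Measurable Ψ},
            ((⨆ θ ∈ S₀,
                Measure.pi (fun _ : Fin n => P θ) {ω | Ψ.1 ω = true}) +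
              ⨆ θ ∈ sepSet w S₀ S₁ (ρseq n),
                Measure.pi (fun _ : Fin n => P θ) {ω | Ψ.1 ω = false})) atTop)
    (rs rr : ℕ → ℝ) (hrs : ∀ n, 0 < rs n) (hrr : ∀ n, 0 < rr n)
    (hrsρ : Tendsto (fun n => rs n / ρstar n) atTop (nhds 0))
    (hrsr : Tendsto (fun n => rs n / rr n) atTop (nhds 0))
    (L : ℝ) (hL : 0 < L)
    (α α' : ℝ) (hα : 0 < α) (hα' : 0 < α') (hαβ : 2 * α + α' < β)
    (ρseq : ℕ → ℝ) (hρ : ∀ n, 0 < ρseq n)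
    (hρρ : Tendsto (fun n => ρseq n / ρstar n) atTop (nhds 0)) :
    ¬ ∃ C : (n : ℕ) → (Fin n → X) → Set Θ,
        (∀ (n : ℕ) (θ : Θ), MeasurableSet {ω : Fin n → X | θ ∈ C n ω}) ∧
        (∀ n : ℕ, MeasurableSet
          {ω : Fin n → X | ENNReal.ofReal (L * rr n) < wDiam w (C n ω)}) ∧
        (∀ n : ℕ, MeasurableSet
          {ω : Fin n → X | ENNReal.ofReal (L * rs n) < wDiam w (C n ω)}) ∧
        (∀ (n : ℕ) (ρ : ℝ), 0 < ρ → MeasurableSet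
          {ω : Fin n → X | (C n ω ∩ sepSet w S₀ S₁ ρ).Nonempty}) ∧
        (ENNReal.ofReal (1 - α) ≤
          liminf (fun n : ℕ =>
            ⨅ θ ∈ S₀ ∪ sepSet w S₀ S₁ (ρseq n),
              Measure.pi (fun _ : Fin n => P θ) {ω | θ ∈ C n ω}) atTop) ∧
        (limsup (fun n : ℕ =>
            ⨆ θ ∈ sepSet w S₀ S₁ (ρseq n),
              Measure.pi (fun _ : Fin n => P θ)
                {ω | ENNReal.ofReal (L * rr n) < wDiam w (C n ω)}) atTop
          ≤ ENNReal.ofReal α') ∧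
        (limsup (fun n : ℕ =>
            ⨆ θ ∈ S₀,
              Measure.pi (fun _ : Fin n => P θ)
                {ω | ENNReal.ofReal (L * rs n) < wDiam w (C n ω)}) atTop
          ≤ ENNReal.ofReal α') :=
  stmt19_general w P hP S₀ S₁ ρstar β htest rs rr hrs hrsρ L hL α α' hα hα' hαβ ρseq hρ hρρ
end
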